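/- Let a, b : ℝ → ℝ be integrable functions with compact support, and define m : ℝ² → ℝ by m(x) = (1/(2π)) ∫₀^{2π} a(⟨x, u_θ⟩) · b(⟨x, v_θ⟩) dθ. Then m is integrable on ℝ² and ∫_{ℝ²} m(x) dx = (∫_ℝ a(t) dt) · (∫_ℝ b(s) ds). -/

import Mathlib

open MeasureTheory Real RealInnerProductSpace

/-- The unit vector u_θ = (cos θ, sin θ) in ℝ². -/
noncomputable def uVec (θ : ℝ) : EuclideanSpace ℝ (Fin 2) :=
  (WithLp.equiv 2 (Fin 2 → ℝ)).symm ![Real.cos θ, Real.sin θ]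

/-- The unit vector v_θ = u_{θ+π/2} = (−sin θ, cos θ) in ℝ². -/
noncomputable def vVec (θ : ℝ) : EuclideanSpace ℝ (Fin 2) :=
  (WithLp.equiv 2 (Fin 2 → ℝ)).symm ![-Real.sin θ, Real.cos θ]

/-- The radialization η²(x) = (1/(2π)) ∫₀^{2π} η(⟨x,u_θ⟩) η(⟨x,v_θ⟩) dθ. -/
noncomputable def radialization (η : ℝ → ℝ) (x : EuclideanSpace ℝ (Fin 2)) : ℝ :=
  (1 / (2 * π)) * ∫ θ in (0:ℝ)..(2 * π), η ⟪x, uVec θ⟫ * η ⟪x, vVec θ⟫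

/-- The mixed radialization of two one-variable functions a, b. -/
noncomputable def radialization2 (a b : ℝ → ℝ) (x : EuclideanSpace ℝ (Fin 2)) : ℝ :=
  (1 / (2 * π)) * ∫ θ in (0:ℝ)..(2 * π), a ⟪x, uVec θ⟫ * b ⟪x, vVec θ⟫

/-!
For fixed θ, x ↦ (⟪x, u_θ⟫, ⟪x, v_θ⟫) is the coordinate map of an orthonormal basis of ℝ², hence
preserves Lebesgue measure, so the integrand integrates over ℝ² to (∫ a) (∫ b) for every θ.
Jointly in (θ, x) this is a measure-preserving skew product on [0, 2π] × ℝ², which makes the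
integrand integrable there and lets Fubini exchange the θ- and x-integrals.
-/

theorem MeasureTheory.MeasurePreserving.integral_comp_of_aestronglyMeasurable
    {α β G : Type*} [MeasurableSpace α] [MeasurableSpace β] [NormedAddCommGroup G]
    [NormedSpace ℝ G] {μ : Measure α} {ν : Measure β} {f : α → β} {g : β → G}
    (hf : MeasurePreserving f μ ν) (hg : AEStronglyMeasurable g ν) :
    ∫ x, g (f x) ∂μ = ∫ y, g y ∂ν := by
  rw [← hf.map_eq] at hg ⊢
  exact (integral_map hf.measurable.aemeasurable hg).symm

theorem OrthonormalBasis.measurePreserving_inner_fin_two {E : Type*} [NormedAddCommGroup E]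
    [InnerProductSpace ℝ E] [FiniteDimensional ℝ E] [MeasurableSpace E] [BorelSpace E]
    (e : OrthonormalBasis (Fin 2) ℝ E) :
    MeasurePreserving (fun x => (⟪e 0, x⟫, ⟪e 1, x⟫)) volume volume := by
  convert (volume_preserving_finTwoArrow ℝ).comp
    ((PiLp.volume_preserving_ofLp (Fin 2)).comp e.measurePreserving_repr) using 1
  funext x
  simp [MeasurableEquiv.finTwoArrow, e.repr_apply_apply]

lemma orthonormal_uVec_vVec (θ : ℝ) : Orthonormal ℝ ![uVec θ, vVec θ] := by
  rw [orthonormal_iff_ite, Fin.forall_fin_two]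
  simp [Fin.forall_fin_two, uVec, vVec, EuclideanSpace.inner_eq_star_dotProduct, mul_comm, ← sq]

lemma measurePreserving_inner_uVec_vVec (θ : ℝ) :
    MeasurePreserving (fun x : EuclideanSpace ℝ (Fin 2) => (⟪x, uVec θ⟫, ⟪x, vVec θ⟫))
      volume volume := by
  have hon := orthonormal_uVec_vVec θ
  have hspan := (hon.linearIndependent.span_eq_top_of_card_eq_finrank (by simp)).ge
  simpa [real_inner_comm] using (OrthonormalBasis.mk hon hspan).measurePreserving_inner_fin_two

@[fun_prop]
lemma continuous_uVec : Continuous uVec :=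
  (PiLp.continuous_toLp 2 _).comp (by fun_prop)

@[fun_prop]
lemma continuous_vVec : Continuous vVec :=
  (PiLp.continuous_toLp 2 _).comp (by fun_prop)

section

variable (μ : Measure ℝ)

lemma measurePreserving_prod_inner_uVec_vVec [SFinite μ] :
    MeasurePreserving
      (fun p : ℝ × EuclideanSpace ℝ (Fin 2) => (p.1, (⟪p.2, uVec p.1⟫, ⟪p.2, vVec p.1⟫)))
      (μ.prod volume) (μ.prod volume) :=
  (MeasurePreserving.id μ).skew_product (by fun_prop)
    (ae_of_all _ fun θ => (measurePreserving_inner_uVec_vVec θ).map_eq)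

variable [IsFiniteMeasure μ] {f g : ℝ → ℝ}

lemma integrable_prod_inner_uVec_vVec (hf : Integrable f) (hg : Integrable g) :
    Integrable (fun p : ℝ × EuclideanSpace ℝ (Fin 2) => f ⟪p.2, uVec p.1⟫ * g ⟪p.2, vVec p.1⟫)
      (μ.prod volume) :=
  (measurePreserving_prod_inner_uVec_vVec μ).integrable_comp_of_integrable
    (g := fun q : ℝ × ℝ × ℝ => f q.2.1 * g q.2.2) ((hf.mul_prod hg).comp_snd μ)

lemma integral_prod_inner_uVec_vVec (hf : Integrable f) (hg : Integrable g) :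
    ∫ p, f ⟪p.2, uVec p.1⟫ * g ⟪p.2, vVec p.1⟫ ∂(μ.prod volume) =
      μ.real Set.univ * ((∫ t, f t) * ∫ s, g s) := by
  rw [(measurePreserving_prod_inner_uVec_vVec μ).integral_comp_of_aestronglyMeasurable
      (g := fun q : ℝ × ℝ × ℝ => f q.2.1 * g q.2.2)
      ((hf.mul_prod hg).comp_snd μ).aestronglyMeasurable,
    integral_fun_snd (fun q : ℝ × ℝ => f q.1 * g q.2), Measure.volume_eq_prod, integral_prod_mul,
    smul_eq_mul]

end

theorem integral_radialization2_general (a b : ℝ → ℝ)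
    (hai : Integrable a volume) (hbi : Integrable b volume) :
    Integrable (radialization2 a b) (volume : Measure (EuclideanSpace ℝ (Fin 2))) ∧
      ∫ x : EuclideanSpace ℝ (Fin 2), radialization2 a b x =
        (∫ t : ℝ, a t) * (∫ s : ℝ, b s) := by
  set μ := volume.restrict (Set.Ioc 0 (2 * π))
  have hrad : radialization2 a b =
      fun x => (2 * π)⁻¹ * ∫ θ, a ⟪x, uVec θ⟫ * b ⟪x, vVec θ⟫ ∂μ := by
    ext x
    rw [radialization2, intervalIntegral.integral_of_le two_pi_pos.le, one_div]
  have hF := integrable_prod_inner_uVec_vVec μ hai hbi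
  have hμ : μ.real Set.univ = 2 * π := by
    rw [measureReal_restrict_apply_univ, Real.volume_real_Ioc_of_le two_pi_pos.le, sub_zero]
  refine ⟨hrad ▸ hF.integral_prod_right.const_mul _, ?_⟩
  rw [hrad, integral_const_mul, ← integral_prod_symm _ hF,
    integral_prod_inner_uVec_vVec μ hai hbi, hμ, inv_mul_cancel_left₀ two_pi_pos.ne']

/-- for compactly supported integrable a, b : ℝ → ℝ, the mixed radialization
m(x) = (1/(2π)) ∫₀^{2π} a(⟨x,u_θ⟩) b(⟨x,v_θ⟩) dθ is integrable on ℝ² and its integral is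
the product of the integrals of a and b. -/
theorem integral_radialization2 (a b : ℝ → ℝ)
    (hai : Integrable a volume) (hbi : Integrable b volume)
    (hac : HasCompactSupport a) (hbc : HasCompactSupport b) :
    Integrable (radialization2 a b) (volume : Measure (EuclideanSpace ℝ (Fin 2))) ∧
      ∫ x : EuclideanSpace ℝ (Fin 2), radialization2 a b x =
        (∫ t : ℝ, a t) * (∫ s : ℝ, b s) :=
  integral_radialization2_general a b hai hbi
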